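/- Let 1 < p < ∞, 0 < α < n/p. There is a constant C = C(n, α, p) such that for every dyadic cube R, every locally finite measure ω supported in R, and s = min(1, p−1): (1/|R|) ∫_R (W_{α,p}ω)^s dx ≤ C ( ω(R)/|R|^{1−αp/n} )^{s/(p−1)}. -/

import Mathlib

open MeasureTheory Set
open scoped ENNReal

/-- A dyadic cube in `ℝⁿ`, given by a generation `k : ℤ` and a corner index `m : Fin n → ℤ`. -/
structure DyadicCube (n : ℕ) where
  k : ℤ
  m : Fin n → ℤ

/-- The set of points of a dyadic cube: `∏ᵢ [mᵢ 2^{-k}, (mᵢ+1) 2^{-k})`. -/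
def DyadicCube.toSet {n : ℕ} (Q : DyadicCube n) : Set (EuclideanSpace ℝ (Fin n)) :=
  {x | ∀ i, (Q.m i : ℝ) * (2 : ℝ) ^ (-Q.k) ≤ x i ∧ x i < ((Q.m i : ℝ) + 1) * (2 : ℝ) ^ (-Q.k)}

/-- The Wolff potential `W_{α,p}ω(x) = ∫₀^∞ (ω(B(x,ρ))/ρ^{n-αp})^{1/(p-1)} dρ/ρ`. -/
noncomputable def wolffPotential (n : ℕ) (α p : ℝ)
    (ω : Measure (EuclideanSpace ℝ (Fin n))) (x : EuclideanSpace ℝ (Fin n)) : ℝ≥0∞ :=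
  ∫⁻ ρ in Set.Ioi (0 : ℝ),
    (ω (Metric.ball x ρ) / ENNReal.ofReal (ρ ^ ((n : ℝ) - α * p))) ^ (1 / (p - 1)) *
      ENNReal.ofReal (1 / ρ)

/-!
Split the `ρ`-integral defining `W_{α,p}ω(x)` at the side length `ℓ` of `R`. For `ρ > ℓ` bound
`ω(B(x,ρ))` by `ω(ℝⁿ) = ω(R)`, leaving a convergent power integral. For `ρ ≤ ℓ` cut `(0, ℓ]` into
the shells `(r_j/2, r_j]`, `r_j = 2^{-j} ℓ`, on which `ω(B(x,ρ)) ≤ ω(B(x,r_j))`. As `s ≤ 1`, the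
`s`-th power of the resulting series is at most the series of `s`-th powers. As `c = s/(p-1) ≤ 1`,
Jensen's inequality on `R` and Fubini, `∫ ω(B(x,r)) dx = |B(0,r)| ω(ℝⁿ)`, bound the average of
`ω(B(x,r_j))^c` by `(|B(0,r_j)| ω(ℝⁿ))^c |R|^{-c}`; the series in `j` is then geometric with
ratio `2^{-αpc} < 1`.
-/

open Metric Module

namespace ENNReal

theorem rpow_tsum_le_tsum_rpow {ι : Type*} (f : ι → ℝ≥0∞) {s : ℝ} (hs0 : 0 < s) (hs1 : s ≤ 1) :
    (∑' i, f i) ^ s ≤ ∑' i, f i ^ s := by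
  classical
  have finite (F : Finset ι) : (∑ i ∈ F, f i) ^ s ≤ ∑ i ∈ F, f i ^ s := by
    induction F using Finset.induction_on with
    | empty => simp [zero_rpow_of_pos hs0]
    | insert i F hi ih =>
      rw [Finset.sum_insert hi, Finset.sum_insert hi]
      exact (rpow_add_le_add_rpow _ _ hs0.le hs1).trans (add_le_add le_rfl ih)
  rw [← le_rpow_inv_iff hs0, ENNReal.tsum_eq_iSup_sum]
  exact iSup_le fun F => (le_rpow_inv_iff hs0).2 ((finite F).trans (ENNReal.sum_le_tsum F))

theorem ofReal_rpow_mul_ofReal_rpow {ρ : ℝ} (hρ : 0 < ρ) (a b : ℝ) :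
    ENNReal.ofReal (ρ ^ a) * ENNReal.ofReal (ρ ^ b) = ENNReal.ofReal (ρ ^ (a + b)) := by
  rw [← ENNReal.ofReal_mul (Real.rpow_nonneg hρ.le a), ← Real.rpow_add hρ]

theorem ofReal_rpow_rpow {ρ : ℝ} (hρ : 0 < ρ) (a c : ℝ) :
    ENNReal.ofReal (ρ ^ a) ^ c = ENNReal.ofReal (ρ ^ (a * c)) := by
  rw [ofReal_rpow_of_pos (Real.rpow_pos_of_pos hρ a), ← Real.rpow_mul hρ.le]

theorem inv_ofReal_rpow {ρ : ℝ} (hρ : 0 < ρ) (a : ℝ) :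
    (ENNReal.ofReal (ρ ^ a))⁻¹ = ENNReal.ofReal (ρ ^ (-a)) := by
  rw [← ofReal_inv_of_pos (Real.rpow_pos_of_pos hρ a), ← Real.rpow_neg hρ.le]

theorem tsum_ofReal_div_two_pow_rpow {L : ℝ} (hL : 0 ≤ L) (a : ℝ) :
    ∑' j : ℕ, ENNReal.ofReal ((L / 2 ^ j) ^ a) =
      ENNReal.ofReal (L ^ a) * (1 - ENNReal.ofReal (2 ^ (-a)))⁻¹ := by
  have term (j : ℕ) : (L / 2 ^ j) ^ a = L ^ a * ((2 : ℝ) ^ (-a)) ^ j := by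
    rw [Real.div_rpow hL (by positivity), ← Real.rpow_natCast, ← Real.rpow_natCast,
      ← Real.rpow_mul zero_le_two, ← Real.rpow_mul zero_le_two, neg_mul,
      Real.rpow_neg zero_le_two, mul_comm a, div_eq_mul_inv]
  simp_rw [term, ENNReal.ofReal_mul (Real.rpow_nonneg hL a),
    ENNReal.ofReal_pow (Real.rpow_nonneg zero_le_two _), ENNReal.tsum_mul_left, tsum_geometric]

theorem inv_one_sub_ofReal_two_rpow_neg_ne_top {a : ℝ} (ha : 0 < a) :
    (1 - ENNReal.ofReal (2 ^ (-a)))⁻¹ ≠ ⊤ := by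
  have : (2 : ℝ) ^ (-a) < 1 :=
    Real.rpow_lt_one_of_one_lt_of_neg _root_.one_lt_two (neg_neg_of_pos ha)
  exact inv_ne_top.2 (tsub_pos_of_lt (ofReal_lt_one.2 this)).ne'

end ENNReal

theorem lintegral_rpow_le_lintegral_rpow_mul_measure_univ {α : Type*} [MeasurableSpace α]
    {μ : Measure α} {f : α → ℝ≥0∞} (hf : AEMeasurable f μ) {c : ℝ} (hc0 : 0 < c)
    (hc1 : c ≤ 1) : ∫⁻ a, f a ^ c ∂μ ≤ (∫⁻ a, f a ∂μ) ^ c * μ univ ^ (1 - c) := by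
  have h := eLpNorm'_le_eLpNorm'_mul_rpow_measure_univ hc0 hc1 hf.aestronglyMeasurable
  simp only [eLpNorm'_eq_lintegral_enorm, enorm_eq_self, ENNReal.rpow_one, div_one] at h
  have := ENNReal.rpow_le_rpow h hc0.le
  rw [← ENNReal.rpow_mul, one_div_mul_cancel hc0.ne', ENNReal.rpow_one,
    ENNReal.mul_rpow_of_nonneg _ _ hc0.le, ← ENNReal.rpow_mul] at this
  convert this using 3
  field_simp

theorem Ioc_zero_subset_iUnion_Ioc_div_two_pow (L : ℝ) :
    Ioc 0 L ⊆ ⋃ j : ℕ, Ioc (L / 2 ^ j / 2) (L / 2 ^ j) := by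
  rintro x ⟨hx0, hxL⟩
  obtain ⟨j, hj, hj'⟩ := exists_nat_pow_near ((one_le_div hx0).2 hxL) one_lt_two
  refine mem_iUnion.2 ⟨j, ?_, ?_⟩
  · rw [div_div, ← pow_succ, div_lt_iff₀ (by positivity)]
    rwa [div_lt_iff₀ hx0, mul_comm] at hj'
  · rwa [le_div_iff₀ (by positivity), mul_comm, ← le_div_iff₀ hx0]

section PowerWeight

variable {φ : ℝ → ℝ≥0∞} {γ : ℝ}

theorem lintegral_Ioc_half_mul_rpow_le (hφ : Monotone φ) (hγ : -1 ≤ γ) {r : ℝ} (hr : 0 < r) :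
    ∫⁻ ρ in Ioc (r / 2) r, φ ρ * ENNReal.ofReal (ρ ^ (-γ - 1)) ≤
      ENNReal.ofReal (2 ^ γ) * (φ r * ENNReal.ofReal (r ^ (-γ))) := by
  have hr2 : 0 < r / 2 := half_pos hr
  have bound : ∀ ρ ∈ Ioc (r / 2) r,
      φ ρ * ENNReal.ofReal (ρ ^ (-γ - 1)) ≤ φ r * ENNReal.ofReal ((r / 2) ^ (-γ - 1)) :=
    fun ρ hρ => mul_le_mul' (hφ hρ.2) (ENNReal.ofReal_le_ofReal
      (Real.rpow_le_rpow_of_nonpos hr2 hρ.1.le (by linarith)))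
  have scale : (r / 2) ^ (-γ - 1) * (r / 2) = 2 ^ γ * r ^ (-γ) := by
    rw [← Real.rpow_add_one hr2.ne', sub_add_cancel, Real.div_rpow hr.le zero_le_two,
      Real.rpow_neg zero_le_two, div_inv_eq_mul, mul_comm]
  calc ∫⁻ ρ in Ioc (r / 2) r, φ ρ * ENNReal.ofReal (ρ ^ (-γ - 1))
      ≤ ∫⁻ _ in Ioc (r / 2) r, φ r * ENNReal.ofReal ((r / 2) ^ (-γ - 1)) :=
        setLIntegral_mono_ae' measurableSet_Ioc (Filter.Eventually.of_forall bound)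
    _ = ENNReal.ofReal (2 ^ γ) * (φ r * ENNReal.ofReal (r ^ (-γ))) := by
        rw [setLIntegral_const, Real.volume_Ioc, sub_half, mul_assoc,
          ← ENNReal.ofReal_mul (Real.rpow_nonneg hr2.le _), scale,
          ENNReal.ofReal_mul (Real.rpow_nonneg zero_le_two _)]
        ring

theorem lintegral_Ioc_zero_mul_rpow_le_tsum (hφ : Monotone φ) (hγ : -1 ≤ γ) {L : ℝ}
    (hL : 0 < L) :
    ∫⁻ ρ in Ioc 0 L, φ ρ * ENNReal.ofReal (ρ ^ (-γ - 1)) ≤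
      ENNReal.ofReal (2 ^ γ) *
        ∑' j : ℕ, φ (L / 2 ^ j) * ENNReal.ofReal ((L / 2 ^ j) ^ (-γ)) := by
  calc ∫⁻ ρ in Ioc 0 L, φ ρ * ENNReal.ofReal (ρ ^ (-γ - 1))
      ≤ ∑' j : ℕ, ∫⁻ ρ in Ioc (L / 2 ^ j / 2) (L / 2 ^ j),
          φ ρ * ENNReal.ofReal (ρ ^ (-γ - 1)) :=
        (lintegral_mono_set (Ioc_zero_subset_iUnion_Ioc_div_two_pow L)).trans
          (lintegral_iUnion_le _ _)
    _ ≤ ∑' j : ℕ, ENNReal.ofReal (2 ^ γ) *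
          (φ (L / 2 ^ j) * ENNReal.ofReal ((L / 2 ^ j) ^ (-γ))) :=
        ENNReal.tsum_le_tsum fun j => lintegral_Ioc_half_mul_rpow_le hφ hγ (by positivity)
    _ = _ := ENNReal.tsum_mul_left

theorem lintegral_Ioi_mul_rpow_le {M : ℝ≥0∞} (hφ : ∀ ρ, φ ρ ≤ M) (hγ : 0 < γ) {L : ℝ}
    (hL : 0 < L) :
    ∫⁻ ρ in Ioi L, φ ρ * ENNReal.ofReal (ρ ^ (-γ - 1)) ≤ M * ENNReal.ofReal (L ^ (-γ) / γ) := by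
  have tail : ∫⁻ ρ in Ioi L, ENNReal.ofReal (ρ ^ (-γ - 1)) = ENNReal.ofReal (L ^ (-γ) / γ) := by
    rw [← ofReal_integral_eq_lintegral_ofReal (integrableOn_Ioi_rpow_of_lt (by linarith) hL)
      ((ae_restrict_mem measurableSet_Ioi).mono fun ρ hρ => Real.rpow_nonneg (hL.trans hρ).le _),
      integral_Ioi_rpow_of_lt (by linarith) hL, sub_add_cancel, neg_div_neg_eq]
  calc ∫⁻ ρ in Ioi L, φ ρ * ENNReal.ofReal (ρ ^ (-γ - 1))
      ≤ ∫⁻ ρ in Ioi L, M * ENNReal.ofReal (ρ ^ (-γ - 1)) :=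
        lintegral_mono fun ρ => mul_le_mul_left (hφ ρ) _
    _ = M * ENNReal.ofReal (L ^ (-γ) / γ) := by
        rw [lintegral_const_mul M (by fun_prop), tail]

end PowerWeight

section BallMeasure

variable {X : Type*} [PseudoMetricSpace X] [MeasurableSpace X]

theorem measurableSet_dist_lt [OpensMeasurableSpace X] [SecondCountableTopology X] (r : ℝ) :
    MeasurableSet {z : X × X | dist z.2 z.1 < r} :=
  measurableSet_lt (measurable_dist.comp measurable_swap) measurable_const

theorem measurable_measure_ball [OpensMeasurableSpace X] [SecondCountableTopology X]
    (ν : Measure X) [SFinite ν] (r : ℝ) : Measurable fun x => ν (ball x r) :=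
  measurable_measure_prodMk_left (measurableSet_dist_lt r)

theorem lintegral_measure_ball_comm [OpensMeasurableSpace X] [SecondCountableTopology X]
    (μ ν : Measure X) [SFinite μ] [SFinite ν] (r : ℝ) :
    ∫⁻ x, ν (ball x r) ∂μ = ∫⁻ y, μ (ball y r) ∂ν := by
  calc ∫⁻ x, ν (ball x r) ∂μ = μ.prod ν {z | dist z.2 z.1 < r} :=
        (Measure.prod_apply (measurableSet_dist_lt r)).symm
    _ = ∫⁻ y, μ (ball y r) ∂ν := by
        rw [Measure.prod_apply_symm (measurableSet_dist_lt r)]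
        simp only [preimage_ofPred_eq, ball, dist_comm]

noncomputable def wolffIntegral (β q : ℝ) (ω : Measure X) (x : X) : ℝ≥0∞ :=
  ∫⁻ ρ in Ioi 0, (ω (ball x ρ) / ENNReal.ofReal (ρ ^ β)) ^ q * ENNReal.ofReal (1 / ρ)

theorem wolffIntegral_le (ω : Measure X) (x : X) {β q L : ℝ} (hβ : 0 < β) (hq : 0 < q)
    (hL : 0 < L) :
    wolffIntegral β q ω x ≤
      ENNReal.ofReal (2 ^ (β * q)) *
          ∑' j : ℕ, ω (ball x (L / 2 ^ j)) ^ q * ENNReal.ofReal ((L / 2 ^ j) ^ (-(β * q))) +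
        ω univ ^ q * ENNReal.ofReal (L ^ (-(β * q)) / (β * q)) := by
  have integrand : EqOn
      (fun ρ => (ω (ball x ρ) / ENNReal.ofReal (ρ ^ β)) ^ q * ENNReal.ofReal (1 / ρ))
      (fun ρ => ω (ball x ρ) ^ q * ENNReal.ofReal (ρ ^ (-(β * q) - 1))) (Ioi 0) :=
    fun ρ (hρ : 0 < ρ) => by
      dsimp only
      rw [div_eq_mul_inv, ENNReal.inv_ofReal_rpow hρ, ENNReal.mul_rpow_of_nonneg _ _ hq.le,
        ENNReal.ofReal_rpow_rpow hρ, one_div, ← Real.rpow_neg_one, mul_assoc,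
        ENNReal.ofReal_rpow_mul_ofReal_rpow hρ, neg_mul, sub_eq_add_neg]
  have mono : Monotone fun ρ => ω (ball x ρ) ^ q :=
    fun _ _ h => ENNReal.rpow_le_rpow (measure_mono (ball_subset_ball h)) hq.le
  rw [wolffIntegral, setLIntegral_congr_fun measurableSet_Ioi integrand,
    ← Ioc_union_Ioi_eq_Ioi hL.le]
  exact (lintegral_union_le _ _ _).trans (add_le_add
    (lintegral_Ioc_zero_mul_rpow_le_tsum mono (by nlinarith) hL)
    (lintegral_Ioi_mul_rpow_le (fun ρ => ENNReal.rpow_le_rpow (measure_mono (subset_univ _)) hq.le)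
      (by positivity) hL))

theorem wolffIntegral_rpow_le (ω : Measure X) (x : X) {β q s L : ℝ} (hβ : 0 < β) (hq : 0 < q)
    (hs0 : 0 < s) (hs1 : s ≤ 1) (hL : 0 < L) :
    wolffIntegral β q ω x ^ s ≤
      ENNReal.ofReal (2 ^ (β * (q * s))) * ∑' j : ℕ,
          ω (ball x (L / 2 ^ j)) ^ (q * s) * ENNReal.ofReal ((L / 2 ^ j) ^ (-(β * (q * s)))) +
        ENNReal.ofReal ((β * q) ^ (-s)) *
          (ω univ ^ (q * s) * ENNReal.ofReal (L ^ (-(β * (q * s))))) := by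
  have hA : ENNReal.ofReal (2 ^ (β * q)) ^ s = ENNReal.ofReal (2 ^ (β * (q * s))) := by
    rw [ENNReal.ofReal_rpow_rpow two_pos, mul_assoc]
  have hterm (r : ℝ) (hr : 0 < r) (a : ℝ≥0∞) :
      (a ^ q * ENNReal.ofReal (r ^ (-(β * q)))) ^ s =
        a ^ (q * s) * ENNReal.ofReal (r ^ (-(β * (q * s)))) := by
    rw [ENNReal.mul_rpow_of_nonneg _ _ hs0.le, ← ENNReal.rpow_mul,
      ENNReal.ofReal_rpow_rpow hr, neg_mul, mul_assoc]
  have hT : (ω univ ^ q * ENNReal.ofReal (L ^ (-(β * q)) / (β * q))) ^ s =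
      ENNReal.ofReal ((β * q) ^ (-s)) *
        (ω univ ^ (q * s) * ENNReal.ofReal (L ^ (-(β * (q * s))))) := by
    rw [div_eq_mul_inv, ENNReal.ofReal_mul (Real.rpow_nonneg hL.le _), ← mul_assoc,
      ENNReal.mul_rpow_of_nonneg _ _ hs0.le, hterm L hL, ← Real.rpow_neg_one,
      ENNReal.ofReal_rpow_rpow (by positivity), neg_one_mul, mul_comm]
  calc _ ≤ (ENNReal.ofReal (2 ^ (β * q)) *
          ∑' j : ℕ, ω (ball x (L / 2 ^ j)) ^ q * ENNReal.ofReal ((L / 2 ^ j) ^ (-(β * q))) +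
        ω univ ^ q * ENNReal.ofReal (L ^ (-(β * q)) / (β * q))) ^ s :=
        ENNReal.rpow_le_rpow (wolffIntegral_le ω x hβ hq hL) hs0.le
    _ ≤ ENNReal.ofReal (2 ^ (β * q)) ^ s *
          ∑' j : ℕ, (ω (ball x (L / 2 ^ j)) ^ q * ENNReal.ofReal ((L / 2 ^ j) ^ (-(β * q)))) ^ s +
        (ω univ ^ q * ENNReal.ofReal (L ^ (-(β * q)) / (β * q))) ^ s := by
        refine (ENNReal.rpow_add_le_add_rpow _ _ hs0.le hs1).trans (add_le_add ?_ le_rfl)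
        rw [ENNReal.mul_rpow_of_nonneg _ _ hs0.le]
        exact mul_le_mul' le_rfl (ENNReal.rpow_tsum_le_tsum_rpow _ hs0 hs1)
    _ = _ := by
        simp only [hA, hT, hterm _ (by positivity : (0 : ℝ) < L / 2 ^ _)]

end BallMeasure

section AddHaar

variable {E : Type*} [NormedAddCommGroup E] [MeasurableSpace E] [BorelSpace E] [NormedSpace ℝ E]
  [FiniteDimensional ℝ E] (μ : Measure E) [μ.IsAddHaarMeasure] (ω : Measure E) [SFinite ω]

theorem lintegral_measure_ball_eq (r : ℝ) : ∫⁻ x, ω (ball x r) ∂μ = μ (ball 0 r) * ω univ := by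
  simp only [lintegral_measure_ball_comm μ ω, Measure.addHaar_ball_center μ _ r, lintegral_const]

theorem setLIntegral_measure_ball_rpow_le (S : Set E) (r : ℝ) {c : ℝ} (hc0 : 0 < c)
    (hc1 : c ≤ 1) :
    ∫⁻ x in S, ω (ball x r) ^ c ∂μ ≤ (μ (ball 0 r) * ω univ) ^ c * μ S ^ (1 - c) := by
  calc ∫⁻ x in S, ω (ball x r) ^ c ∂μ
      ≤ (∫⁻ x in S, ω (ball x r) ∂μ) ^ c * μ.restrict S univ ^ (1 - c) :=
        lintegral_rpow_le_lintegral_rpow_mul_measure_univ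
          (measurable_measure_ball ω r).aemeasurable hc0 hc1
    _ ≤ (μ (ball 0 r) * ω univ) ^ c * μ S ^ (1 - c) := by
        rw [Measure.restrict_apply_univ, ← lintegral_measure_ball_eq μ ω r]
        gcongr
        exact Measure.restrict_le_self

theorem setLIntegral_tsum_measure_ball_rpow_le {S : Set E} {L β c : ℝ} (hL : 0 < L)
    (hS : μ S = ENNReal.ofReal (L ^ finrank ℝ E)) (hc0 : 0 < c) (hc1 : c ≤ 1) :
    ∫⁻ x in S, ∑' j : ℕ,
        ω (ball x (L / 2 ^ j)) ^ c * ENNReal.ofReal ((L / 2 ^ j) ^ (-(β * c))) ∂μ ≤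
      μ (ball 0 1) ^ c * (1 - ENNReal.ofReal (2 ^ (-((finrank ℝ E - β) * c))))⁻¹ *
        (ω univ ^ c * ENNReal.ofReal (L ^ (-(β * c)))) * μ S := by
  set d : ℝ := (finrank ℝ E : ℝ)
  have hV : μ S ^ (1 - c) * ENNReal.ofReal (L ^ ((d - β) * c)) =
      ENNReal.ofReal (L ^ (-(β * c))) * μ S := by
    rw [hS, ← Real.rpow_natCast, ENNReal.ofReal_rpow_rpow hL,
      ENNReal.ofReal_rpow_mul_ofReal_rpow hL, ENNReal.ofReal_rpow_mul_ofReal_rpow hL]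
    congr 2
    ring
  have term (r : ℝ) (hr : 0 < r) :
      (μ (ball 0 r) * ω univ) ^ c * μ S ^ (1 - c) * ENNReal.ofReal (r ^ (-(β * c))) =
        μ (ball 0 1) ^ c * ω univ ^ c * μ S ^ (1 - c) * ENNReal.ofReal (r ^ ((d - β) * c)) := by
    rw [Measure.addHaar_ball_of_pos μ 0 hr, ← Real.rpow_natCast,
      ENNReal.mul_rpow_of_nonneg _ _ hc0.le, ENNReal.mul_rpow_of_nonneg _ _ hc0.le,
      ENNReal.ofReal_rpow_rpow hr, mul_comm _ (ENNReal.ofReal (r ^ ((d - β) * c))),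
      show (d - β) * c = d * c + -(β * c) by ring, ← ENNReal.ofReal_rpow_mul_ofReal_rpow hr]
    ring
  have hmeas (j : ℕ) := (measurable_measure_ball ω (L / 2 ^ j)).pow_const c
  calc ∫⁻ x in S, ∑' j : ℕ,
        ω (ball x (L / 2 ^ j)) ^ c * ENNReal.ofReal ((L / 2 ^ j) ^ (-(β * c))) ∂μ
      = ∑' j : ℕ, (∫⁻ x in S, ω (ball x (L / 2 ^ j)) ^ c ∂μ) *
          ENNReal.ofReal ((L / 2 ^ j) ^ (-(β * c))) := by
        rw [lintegral_tsum fun j => ((hmeas j).mul_const _).aemeasurable]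
        simp only [lintegral_mul_const _ (hmeas _)]
    _ ≤ ∑' j : ℕ, (μ (ball 0 (L / 2 ^ j)) * ω univ) ^ c * μ S ^ (1 - c) *
          ENNReal.ofReal ((L / 2 ^ j) ^ (-(β * c))) :=
        ENNReal.tsum_le_tsum fun j =>
          mul_le_mul_left (setLIntegral_measure_ball_rpow_le μ ω S _ hc0 hc1) _
    _ = μ (ball 0 1) ^ c * ω univ ^ c * μ S ^ (1 - c) *
          ∑' j : ℕ, ENNReal.ofReal ((L / 2 ^ j) ^ ((d - β) * c)) := by
        rw [← ENNReal.tsum_mul_left]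
        exact tsum_congr fun j => term _ (by positivity)
    _ = _ := by
        rw [ENNReal.tsum_ofReal_div_two_pow_rpow hL.le, ← mul_assoc,
          mul_assoc _ (μ S ^ (1 - c)), hV]
        ring

theorem setLIntegral_wolffIntegral_rpow_le {S : Set E} {L β q s : ℝ} (hL : 0 < L)
    (hS : μ S = ENNReal.ofReal (L ^ finrank ℝ E)) (hβ : 0 < β) (hq : 0 < q) (hs0 : 0 < s)
    (hs1 : s ≤ 1) (hqs : q * s ≤ 1) :
    (μ S)⁻¹ * ∫⁻ x in S, wolffIntegral β q ω x ^ s ∂μ ≤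
      (ENNReal.ofReal (2 ^ (β * (q * s))) * (μ (ball 0 1) ^ (q * s) *
          (1 - ENNReal.ofReal (2 ^ (-((finrank ℝ E - β) * (q * s)))))⁻¹) +
        ENNReal.ofReal ((β * q) ^ (-s))) *
        (ω univ ^ (q * s) * ENNReal.ofReal (L ^ (-(β * (q * s))))) := by
  have hS0 : μ S ≠ 0 := by rw [hS]; exact (ENNReal.ofReal_pos.2 (by positivity)).ne'
  have hStop : μ S ≠ ⊤ := by rw [hS]; exact ENNReal.ofReal_ne_top
  set A := ENNReal.ofReal (2 ^ (β * (q * s)))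
  set K := μ (ball 0 1) ^ (q * s) * (1 - ENNReal.ofReal (2 ^ (-((finrank ℝ E - β) * (q * s)))))⁻¹
  set Φ := ω univ ^ (q * s) * ENNReal.ofReal (L ^ (-(β * (q * s))))
  set T := ENNReal.ofReal ((β * q) ^ (-s))
  have hmeas : Measurable fun x => ∑' j : ℕ,
      ω (ball x (L / 2 ^ j)) ^ (q * s) * ENNReal.ofReal ((L / 2 ^ j) ^ (-(β * (q * s)))) :=
    Measurable.tsum fun j => ((measurable_measure_ball ω _).pow_const _).mul_const _
  calc (μ S)⁻¹ * ∫⁻ x in S, wolffIntegral β q ω x ^ s ∂μ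
      ≤ (μ S)⁻¹ * ∫⁻ x in S, (A * ∑' j : ℕ, ω (ball x (L / 2 ^ j)) ^ (q * s) *
          ENNReal.ofReal ((L / 2 ^ j) ^ (-(β * (q * s)))) + T * Φ) ∂μ := by
        gcongr with x
        exact wolffIntegral_rpow_le ω x hβ hq hs0 hs1 hL
    _ = (μ S)⁻¹ * (A * ∫⁻ x in S, ∑' j : ℕ, ω (ball x (L / 2 ^ j)) ^ (q * s) *
          ENNReal.ofReal ((L / 2 ^ j) ^ (-(β * (q * s)))) ∂μ + T * Φ * μ S) := by
        rw [lintegral_add_right _ measurable_const, setLIntegral_const, lintegral_const_mul _ hmeas]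
    _ ≤ (μ S)⁻¹ * (A * (K * Φ * μ S) + T * Φ * μ S) := by
        gcongr
        exact setLIntegral_tsum_measure_ball_rpow_le μ ω hL hS (by positivity) hqs
    _ = (A * K + T) * Φ * ((μ S)⁻¹ * μ S) := by ring
    _ = (A * K + T) * Φ := by rw [ENNReal.inv_mul_cancel hS0 hStop, mul_one]

theorem exists_setLIntegral_wolffIntegral_rpow_le {β q s : ℝ} (hβ : 0 < β)
    (hβE : β < finrank ℝ E) (hq : 0 < q) (hs0 : 0 < s) (hs1 : s ≤ 1) (hqs : q * s ≤ 1) :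
    ∃ C : ℝ≥0∞, C ≠ ⊤ ∧ ∀ (ω : Measure E) [SFinite ω] (S : Set E) (L : ℝ), 0 < L →
      μ S = ENNReal.ofReal (L ^ finrank ℝ E) →
      (μ S)⁻¹ * ∫⁻ x in S, wolffIntegral β q ω x ^ s ∂μ ≤
        C * (ω univ ^ (q * s) * ENNReal.ofReal (L ^ (-(β * (q * s))))) := by
  refine ⟨_, ?_, fun ω _ S L hL hS =>
    setLIntegral_wolffIntegral_rpow_le μ ω hL hS hβ hq hs0 hs1 hqs⟩
  have hratio := ENNReal.inv_one_sub_ofReal_two_rpow_neg_ne_top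
    (mul_pos (sub_pos.2 hβE) (mul_pos hq hs0))
  have hball := ENNReal.rpow_ne_top_of_nonneg (mul_pos hq hs0).le (measure_ball_lt_top (μ := μ)
    (x := 0) (r := 1)).ne
  exact ENNReal.add_ne_top.2 ⟨ENNReal.mul_ne_top ENNReal.ofReal_ne_top
    (ENNReal.mul_ne_top hball hratio), ENNReal.ofReal_ne_top⟩

end AddHaar

theorem DyadicCube.volume_toSet {n : ℕ} (R : DyadicCube n) :
    volume R.toSet = ENNReal.ofReal (((2 : ℝ) ^ (-R.k)) ^ n) := by
  have hset : R.toSet = (MeasurableEquiv.toLp 2 (Fin n → ℝ)).symm ⁻¹'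
      (univ.pi fun i => Ico ((R.m i : ℝ) * 2 ^ (-R.k)) (((R.m i : ℝ) + 1) * 2 ^ (-R.k))) := by
    ext x
    simp only [DyadicCube.toSet, mem_ofPred_eq, mem_preimage, mem_pi, mem_univ,
      forall_true_left, mem_Ico]
    rfl
  rw [hset, (EuclideanSpace.volume_preserving_symm_measurableEquiv_toLp (Fin n)).measure_preimage
      (MeasurableSet.univ_pi fun i => measurableSet_Ico).nullMeasurableSet, volume_pi_pi]
  simp_rw [Real.volume_Ico, add_mul, one_mul, add_sub_cancel_left, Finset.prod_const,
    Finset.card_univ, Fintype.card_fin]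
  rw [← ENNReal.ofReal_pow (by positivity)]

theorem wolffPotential_eq_wolffIntegral (n : ℕ) (α p : ℝ)
    (ω : Measure (EuclideanSpace ℝ (Fin n))) :
    wolffPotential n α p ω = wolffIntegral (n - α * p) (1 / (p - 1)) ω :=
  rfl

/-- Local average estimate ([SV2, Lemma 3.1]): with `s = min(1, p-1)`, for every dyadic cube `R`
and every locally finite measure `ω` supported in `R`,
`(1/|R|) ∫_R (W_{α,p}ω)^s dx ≤ C(n,α,p) (ω(R)/|R|^{1-αp/n})^{s/(p-1)}`. -/
theorem wolff_local_average_estimate (n : ℕ) (α p : ℝ) (hp : 1 < p)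
    (hα : 0 < α) (hαn : α < (n : ℝ) / p) :
    ∃ C : ℝ≥0∞, C ≠ ⊤ ∧
      ∀ (R : DyadicCube n) (ω : Measure (EuclideanSpace ℝ (Fin n)))
        [IsLocallyFiniteMeasure ω], ω R.toSetᶜ = 0 →
        (volume R.toSet)⁻¹ *
            ∫⁻ x in R.toSet, (wolffPotential n α p ω x) ^ (min 1 (p - 1))
          ≤ C * (ω R.toSet / (volume R.toSet) ^ (1 - α * p / n)) ^ (min 1 (p - 1) / (p - 1)) := by
  set q : ℝ := 1 / (p - 1)
  set s : ℝ := min 1 (p - 1)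
  have hp1 : 0 < p - 1 := by linarith
  have hαp : 0 < α * p := mul_pos hα (by linarith)
  have hαpn : α * p < n := (lt_div_iff₀ (by linarith)).1 hαn
  have hs0 : 0 < s := lt_min one_pos hp1
  have hqs : q * s = s / (p - 1) := one_div_mul_eq_div _ _
  obtain ⟨C, hC, average_le⟩ := exists_setLIntegral_wolffIntegral_rpow_le
    (volume : Measure (EuclideanSpace ℝ (Fin n))) (sub_pos.2 hαpn)
    (by rw [finrank_euclideanSpace_fin]; exact sub_lt_self _ hαp) (one_div_pos.2 hp1) hs0 (min_le_left _ _)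
    (by rw [hqs, div_le_one hp1]; exact min_le_right _ _)
  refine ⟨C, hC, fun R ω _ hω => ?_⟩
  set L : ℝ := 2 ^ (-R.k)
  have hL : 0 < L := by positivity
  have hvol : volume R.toSet = ENNReal.ofReal (L ^ finrank ℝ (EuclideanSpace ℝ (Fin n))) := by
    rw [R.volume_toSet, finrank_euclideanSpace_fin]
  have scaling : (ω univ / volume R.toSet ^ (1 - α * p / n)) ^ (s / (p - 1)) =
      ω univ ^ (q * s) * ENNReal.ofReal (L ^ (-((n - α * p) * (q * s)))) := by
    have hn : (n : ℝ) ≠ 0 := (hαp.trans hαpn).ne'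
    rw [hvol, finrank_euclideanSpace_fin, ← Real.rpow_natCast, ENNReal.ofReal_rpow_rpow hL,
      ← hqs, ENNReal.div_rpow_of_nonneg _ _ (by positivity), ENNReal.ofReal_rpow_rpow hL,
      div_eq_mul_inv, ENNReal.inv_ofReal_rpow hL]
    congr 3
    field_simp
  rw [measure_congr (ae_eq_univ.2 hω), scaling, wolffPotential_eq_wolffIntegral]
  exact average_le ω R.toSet L hL hvol
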